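/- If x is a binary word such that 01x10 is a factor of the Thue–Morse word t, then the word 001·θ̄(x)·011, where θ̄(x) denotes the letterwise complement (0 ↔ 1) of θ(x), is cubefree and has length |θ(x)| + 6. (Equivalently, the complement of 110·θ(x)·100 is a cubefree word with prefix 00 and suffix 11.) -/

import Mathlib

/-- The Thue–Morse morphism θ (0 ↦ 01, 1 ↦ 10), with 0 = `false`, 1 = `true`,
applied letterwise to a word. -/
def tmMap (w : List Bool) : List Bool :=
  w.flatMap (fun b => if b then [true, false] else [false, true])

/-- A word is cubefree if it contains no non-empty factor of the form `x ++ x ++ x`. -/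
def Cubefree (w : List Bool) : Prop :=
  ∀ x : List Bool, x ≠ [] → ¬ (x ++ x ++ x) <:+: w

/-- `w` is a factor of the Thue–Morse word `t = θ^ω(0)`: since the words `θ^m(0)`
are prefixes of `t` whose lengths tend to infinity, this holds iff `w` is an
infix of `θ^m(0)` for some `m`. -/
def FactorTM (w : List Bool) : Prop :=
  ∃ m : ℕ, w <:+: tmMap^[m] [false]

/-- The binary morphism determined by `h : Bool → List Bool` is cubefree. -/
def CubefreeMorphism (h : Bool → List Bool) : Prop :=
  ∀ w : List Bool, Cubefree w → Cubefree (w.flatMap h)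

/-!
Write `t(n)` for the parity of the binary digit sum of `n`, so that `t(2n) = t(n)`,
`t(2n + 1) = ¬t(n)` and `θ^m(0) = t(0) ⋯ t(2^m - 1)`. A cube of period `n` in `t` cannot exist:
for even `n` it halves to a cube of period `n / 2`, for odd `n ≥ 3` the two rules force three
equal consecutive letters, which `t(2i) ≠ t(2i + 1)` rules out. Hence every factor of `t` is
cubefree, in particular `θ(01x10) = 0 · 110 θ(x) 100 · 1` and its factor `110 θ(x) 100`, and
complementing letters preserves cubefreeness.
-/

def thueMorse (n : ℕ) : Bool :=
  if n = 0 then false else xor (n % 2 == 1) (thueMorse (n / 2))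

@[simp]
lemma thueMorse_two_mul (n : ℕ) : thueMorse (2 * n) = thueMorse n := by
  rcases Nat.eq_zero_or_pos n with rfl | hn
  · rfl
  · rw [thueMorse]
    simp [hn.ne']

@[simp]
lemma thueMorse_two_mul_add_one (n : ℕ) : thueMorse (2 * n + 1) = !thueMorse n := by
  rw [thueMorse]
  simp [show (2 * n + 1) / 2 = n by omega]

lemma thueMorse_ne_or_ne (r : ℕ) :
    thueMorse r ≠ thueMorse (r + 1) ∨ thueMorse (r + 1) ≠ thueMorse (r + 2) := by
  obtain ⟨q, rfl | rfl⟩ := Nat.even_or_odd' r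
  · left
    simp
  · right
    rw [show 2 * q + 1 + 1 = 2 * (q + 1) by ring, show 2 * q + 1 + 2 = 2 * (q + 1) + 1 by ring]
    simp

theorem thueMorse_not_cube {n : ℕ} (hn : 0 < n) (k : ℕ) :
    ¬ ∀ i, k ≤ i → i < k + 2 * n → thueMorse i = thueMorse (i + n) := by
  induction n using Nat.strong_induction_on generalizing k with
  | _ n ih =>
  intro H
  obtain ⟨m, rfl | rfl⟩ := Nat.even_or_odd' n
  · refine ih m (by omega) (by omega) ((k + 1) / 2) fun i hki hik => ?_
    rw [← thueMorse_two_mul, ← thueMorse_two_mul (i + m), mul_add]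
    exact H (2 * i) (by omega) (by omega)
  rcases Nat.eq_zero_or_pos m with rfl | hm
  · simp only [mul_zero, zero_add] at H
    exact (thueMorse_ne_or_ne k).elim (· (H k le_rfl (by omega)))
      (· (H (k + 1) (by omega) (by omega)))
  set q := (k + 1) / 2
  have e₀ := H (2 * q) (by omega) (by omega)
  rw [show 2 * q + (2 * m + 1) = 2 * (q + m) + 1 by ring, thueMorse_two_mul,
    thueMorse_two_mul_add_one] at e₀
  have e₁ := H (2 * q + 1) (by omega) (by omega)
  rw [show 2 * q + 1 + (2 * m + 1) = 2 * (q + m + 1) by ring, thueMorse_two_mul,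
    thueMorse_two_mul_add_one] at e₁
  have e₂ := H (2 * q + 2) (by omega) (by omega)
  rw [show 2 * q + 2 + (2 * m + 1) = 2 * (q + m + 1) + 1 by ring,
    show 2 * q + 2 = 2 * (q + 1) by ring, thueMorse_two_mul, thueMorse_two_mul_add_one] at e₂
  have e₃ := H (2 * q + 3) (by omega) (by omega)
  rw [show 2 * q + 3 + (2 * m + 1) = 2 * (q + m + 2) by ring,
    show 2 * q + 3 = 2 * (q + 1) + 1 by ring, thueMorse_two_mul, thueMorse_two_mul_add_one] at e₃
  rcases thueMorse_ne_or_ne (q + m) with h | h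
  · exact h (by rw [← e₁, e₀, Bool.not_not])
  · exact h (by rw [← e₃, e₂, Bool.not_not])

lemma tmMap_append (u v : List Bool) : tmMap (u ++ v) = tmMap u ++ tmMap v :=
  List.flatMap_append

lemma tmMap_map_thueMorse_range (N : ℕ) :
    tmMap ((List.range N).map thueMorse) = (List.range (2 * N)).map thueMorse := by
  induction N with
  | zero => rfl
  | succ N ih =>
    rw [List.range_succ, List.map_append, tmMap_append, ih,
      show 2 * (N + 1) = 2 * N + 1 + 1 by ring, List.range_succ, List.range_succ]
    cases h : thueMorse N <;> simp [h, tmMap]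

lemma tmMap_iterate_false (m : ℕ) :
    tmMap^[m] [false] = (List.range (2 ^ m)).map thueMorse := by
  induction m with
  | zero => simp [thueMorse]
  | succ m ih => rw [Function.iterate_succ_apply', ih, tmMap_map_thueMorse_range, pow_succ']

lemma List.exists_getElem_eq_of_infix_map_range {α : Type*} {f : ℕ → α} {u : List α}
    {N : ℕ} (h : u <:+: (List.range N).map f) :
    ∃ k, ∀ i (hi : i < u.length), u[i] = f (i + k) := by
  obtain ⟨k, hk, hu⟩ := List.infix_iff_getElem?.mp h
  refine ⟨k, fun i hi => ?_⟩
  have := hu i hi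
  rw [List.getElem?_map, List.getElem?_range (by simp at hk; omega)] at this
  simpa [eq_comm] using this

lemma List.getElem_append_append_self_add_length {α : Type*} (x : List α) {j : ℕ}
    (hj : j < 2 * x.length) :
    (x ++ x ++ x)[j + x.length]'(by simp; omega) = (x ++ x ++ x)[j]'(by simp; omega) := by
  simp only [List.getElem_append, List.length_append]
  split_ifs <;> first | omega | (congr 1; omega)

lemma FactorTM.cubefree {w : List Bool} (hw : FactorTM w) : Cubefree w := by
  obtain ⟨m, hm⟩ := hw
  intro x hx hcube
  rw [tmMap_iterate_false] at hm
  obtain ⟨k, hk⟩ := List.exists_getElem_eq_of_infix_map_range (hcube.trans hm)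
  refine thueMorse_not_cube (List.length_pos_iff.mpr hx) k fun i hki hik => ?_
  have hlen : (x ++ x ++ x).length = 3 * x.length := by simp; omega
  rw [show i = (i - k) + k by omega, add_right_comm, ← hk _ (by omega), ← hk _ (by omega),
    List.getElem_append_append_self_add_length x (by omega)]

lemma Cubefree.map_not {w : List Bool} (hw : Cubefree w) : Cubefree (w.map (!·)) := by
  intro x hx hcube
  refine hw (x.map (!·)) (by simpa using hx) ?_
  simpa [Function.comp_def] using hcube.map (!·)

lemma FactorTM.of_infix {u w : List Bool} (h : u <:+: w) (hw : FactorTM w) : FactorTM u :=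
  let ⟨m, hm⟩ := hw; ⟨m, h.trans hm⟩

lemma FactorTM.tmMap {w : List Bool} (hw : FactorTM w) : FactorTM (tmMap w) := by
  obtain ⟨m, s, t, h⟩ := hw
  refine ⟨m + 1, _root_.tmMap s, _root_.tmMap t, ?_⟩
  rw [Function.iterate_succ_apply', ← h, tmMap_append, tmMap_append]

theorem stmt15 (x : List Bool)
    (hx : FactorTM ([false, true] ++ x ++ [true, false])) :
    Cubefree ([false, false, true] ++ (tmMap x).map (fun b => !b) ++ [false, true, true]) ∧
    ([false, false, true] ++ (tmMap x).map (fun b => !b) ++ [false, true, true]).length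
      = (tmMap x).length + 6 := by
  refine ⟨?_, by simp⟩
  have himage : tmMap ([false, true] ++ x ++ [true, false])
      = [false] ++ ([true, true, false] ++ tmMap x ++ [true, false, false]) ++ [true] := by
    simp [tmMap]
  have hfactor : FactorTM ([true, true, false] ++ tmMap x ++ [true, false, false]) :=
    hx.tmMap.of_infix ⟨[false], [true], himage.symm⟩
  simpa using hfactor.cubefree.map_not
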